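/- Let H ∈ M_N(ℂ) be Hermitian and (V_d) a finite family of matrices in M_N(ℂ), and let 𝓛† denote the adjoint (Heisenberg-picture) Lindblad generator, 𝓛†(E) = i(HE - EH) + Σ_d (V_d† E V_d - ½(E V_d† V_d + V_d† V_d E)). If E ∈ M_N(ℂ) is unitary and satisfies 𝓛†(E) = iα E for some real number α, then α = 0. -/

import Mathlib

open Matrix
open scoped ComplexOrder

/-- The adjoint (Heisenberg-picture) Lindblad generator
`𝓛†(E) = i[H,E] + Σ_d (V_d† E V_d - ½(E V_d† V_d + V_d† V_d E))`. -/
noncomputable def lindbladAdj {n : Type*} [Fintype n] [DecidableEq n] {ι : Type*} [Fintype ι]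
    (H : Matrix n n ℂ) (V : ι → Matrix n n ℂ) (E : Matrix n n ℂ) : Matrix n n ℂ :=
  Complex.I • (H * E - E * H) +
    ∑ d, ((V d)ᴴ * E * V d - (1 / 2 : ℂ) • (E * ((V d)ᴴ * V d) + ((V d)ᴴ * V d) * E))

/-!
The dissipation identity of a Lindblad generator gives, for unitary `E`,
`Eᴴ 𝓛†(E) + 𝓛†(E)ᴴ E = -∑_d [E, V_d]ᴴ [E, V_d]`. An eigenvalue `iα` on the imaginary axis makes
the left side vanish, so `E` commutes with every `V_d`. Then each term of `tr (Eᴴ 𝓛†(E))` cancels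
by cyclicity of the trace, whereas this trace equals `iα N`.
-/

namespace Matrix

variable {n : Type*} [Fintype n]

noncomputable def lindbladDissipatorAdj (W E : Matrix n n ℂ) : Matrix n n ℂ :=
  Wᴴ * E * W - (1 / 2 : ℂ) • (E * (Wᴴ * W) + (Wᴴ * W) * E)

theorem eq_zero_of_sum_conjTranspose_mul_self_eq_zero {m ι R : Type*} [Fintype m] [Fintype ι]
    [CommRing R] [PartialOrder R] [StarRing R] [StarOrderedRing R] [NoZeroDivisors R]
    {A : ι → Matrix m n R} (h : ∑ i, (A i)ᴴ * A i = 0) (i : ι) : A i = 0 := by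
  have htrace : ∑ j, ((A j)ᴴ * A j).trace = 0 := by rw [← trace_sum, h, trace_zero]
  rw [← trace_conjTranspose_mul_self_eq_zero_iff]
  exact (Finset.sum_eq_zero_iff_of_nonneg fun j _ =>
    (posSemidef_conjTranspose_mul_self (A j)).trace_nonneg).1 htrace i (Finset.mem_univ i)

variable [DecidableEq n]

theorem lindbladAdj_eq {ι : Type*} [Fintype ι] (H : Matrix n n ℂ) (V : ι → Matrix n n ℂ)
    (E : Matrix n n ℂ) :
    lindbladAdj H V E = Complex.I • (H * E - E * H) + ∑ d, lindbladDissipatorAdj (V d) E :=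
  rfl

theorem conjTranspose_mul_lindbladDissipatorAdj_add {E : Matrix n n ℂ} (hE : Eᴴ * E = 1)
    (W : Matrix n n ℂ) :
    Eᴴ * lindbladDissipatorAdj W E + (lindbladDissipatorAdj W E)ᴴ * E =
      -((E * W - W * E)ᴴ * (E * W - W * E)) := by
  have hE' (X : Matrix n n ℂ) : Eᴴ * (E * X) = X := by rw [← mul_assoc, hE, one_mul]
  simp only [lindbladDissipatorAdj, conjTranspose_mul, conjTranspose_sub, conjTranspose_add,
    conjTranspose_smul, conjTranspose_conjTranspose, mul_sub, sub_mul, mul_add, add_mul,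
    smul_add, mul_smul_comm, smul_mul_assoc, mul_assoc, hE, hE', mul_one, star_div₀, star_one,
    star_ofNat]
  module

theorem conjTranspose_mul_commutator_add {E : Matrix n n ℂ} (hE : Eᴴ * E = 1)
    {H : Matrix n n ℂ} (hH : H.IsHermitian) :
    Eᴴ * (Complex.I • (H * E - E * H)) + (Complex.I • (H * E - E * H))ᴴ * E = 0 := by
  have hE' (X : Matrix n n ℂ) : Eᴴ * (E * X) = X := by rw [← mul_assoc, hE, one_mul]
  simp only [conjTranspose_mul, conjTranspose_sub, conjTranspose_smul, hH.eq, mul_sub, sub_mul,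
    mul_smul_comm, smul_mul_assoc, mul_assoc, hE, hE', mul_one, Complex.star_def, Complex.conj_I]
  module

variable {ι : Type*} [Fintype ι] {H : Matrix n n ℂ} {V : ι → Matrix n n ℂ} {E : Matrix n n ℂ}

theorem conjTranspose_mul_lindbladAdj_add (hH : H.IsHermitian) (hE : Eᴴ * E = 1) :
    Eᴴ * lindbladAdj H V E + (lindbladAdj H V E)ᴴ * E =
      -∑ d, (E * V d - V d * E)ᴴ * (E * V d - V d * E) := by
  rw [lindbladAdj_eq, mul_add, conjTranspose_add, add_mul, add_add_add_comm,
    conjTranspose_mul_commutator_add hE hH, zero_add, conjTranspose_sum, Finset.mul_sum,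
    Finset.sum_mul, ← Finset.sum_add_distrib, ← Finset.sum_neg_distrib]
  exact Finset.sum_congr rfl fun d _ => conjTranspose_mul_lindbladDissipatorAdj_add hE (V d)

theorem commute_of_lindbladAdj_eq_smul (hH : H.IsHermitian) (hE : E ∈ unitary (Matrix n n ℂ))
    {α : ℝ} (heig : lindbladAdj H V E = (Complex.I * α) • E) (d : ι) : Commute E (V d) := by
  have hE₁ : Eᴴ * E = 1 := Unitary.star_mul_self_of_mem hE
  have hzero : Eᴴ * lindbladAdj H V E + (lindbladAdj H V E)ᴴ * E = 0 := by
    simp [heig, hE₁, Complex.conj_ofReal]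
  rw [conjTranspose_mul_lindbladAdj_add hH hE₁, neg_eq_zero] at hzero
  exact sub_eq_zero.1 (eq_zero_of_sum_conjTranspose_mul_self_eq_zero hzero d)

theorem trace_conjTranspose_mul_commutator (hE : E ∈ unitary (Matrix n n ℂ)) (H : Matrix n n ℂ) :
    (Eᴴ * (H * E - E * H)).trace = 0 := by
  have hE₁ : Eᴴ * E = 1 := Unitary.star_mul_self_of_mem hE
  have hE₂ : E * Eᴴ = 1 := Unitary.mul_star_self_of_mem hE
  rw [mul_sub, trace_sub, trace_mul_comm, mul_assoc, hE₂, ← mul_assoc, hE₁, mul_one, one_mul,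
    sub_self]

theorem trace_conjTranspose_mul_lindbladDissipatorAdj (hE : E ∈ unitary (Matrix n n ℂ))
    {W : Matrix n n ℂ} (hW : Commute E W) : (Eᴴ * lindbladDissipatorAdj W E).trace = 0 := by
  have hE₁ : Eᴴ * E = 1 := Unitary.star_mul_self_of_mem hE
  have hE₂ : E * Eᴴ = 1 := Unitary.mul_star_self_of_mem hE
  have hEW : Wᴴ * E * W = Wᴴ * W * E := by rw [mul_assoc, hW.eq, mul_assoc]
  have hcycle : (Eᴴ * (Wᴴ * W * E)).trace = (Wᴴ * W).trace := by
    rw [trace_mul_comm, mul_assoc, hE₂, mul_one]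
  have hcancel : (Eᴴ * (E * (Wᴴ * W))).trace = (Wᴴ * W).trace := by
    rw [← mul_assoc, hE₁, one_mul]
  rw [lindbladDissipatorAdj, hEW, mul_sub, mul_smul_comm, mul_add, trace_sub, trace_smul,
    trace_add, hcycle, hcancel, smul_eq_mul]
  ring

variable (H) in
theorem trace_conjTranspose_mul_lindbladAdj (hE : E ∈ unitary (Matrix n n ℂ))
    (hV : ∀ d, Commute E (V d)) : (Eᴴ * lindbladAdj H V E).trace = 0 := by
  rw [lindbladAdj_eq, mul_add, trace_add, mul_smul_comm, trace_smul,
    trace_conjTranspose_mul_commutator hE, Finset.mul_sum, trace_sum,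
    Finset.sum_eq_zero fun d _ => trace_conjTranspose_mul_lindbladDissipatorAdj hE (hV d),
    smul_zero, add_zero]

end Matrix

/-- If a unitary `E` satisfies `𝓛†(E) = iα E` with `α` real, then `α = 0`. -/
theorem unitary_eigenoperator_eigenvalue_zero (N : ℕ) (hN : 1 ≤ N)
    (H : Matrix (Fin N) (Fin N) ℂ) (hH : H.IsHermitian)
    {ι : Type*} [Fintype ι] (V : ι → Matrix (Fin N) (Fin N) ℂ)
    (E : Matrix (Fin N) (Fin N) ℂ) (hE : Eᴴ * E = 1 ∧ E * Eᴴ = 1)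
    (α : ℝ) (heig : lindbladAdj H V E = (Complex.I * (α : ℂ)) • E) :
    α = 0 := by
  have hU : E ∈ unitary (Matrix (Fin N) (Fin N) ℂ) := Unitary.mem_iff.2 hE
  have htrace :=
    trace_conjTranspose_mul_lindbladAdj H hU (commute_of_lindbladAdj_eq_smul hH hU heig)
  rw [heig, mul_smul_comm, hE.1, trace_smul, trace_one, Fintype.card_fin] at htrace
  have hN' : (N : ℂ) ≠ 0 := by exact_mod_cast (by omega : N ≠ 0)
  simpa [Complex.I_ne_zero, hN'] using htrace
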